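/- Let R be a commutative star ring, H : Matrix n n R Hermitian, k : n, and α : n → R with α k = 0. Suppose H k j = Σ_l α l * H l j for all j (the k-th row of H is a combination of the other rows). Set M = 1 − Σ_l α l • stdBasisMatrix k l 1 (where the sum omits l = k since α k = 0). Then the matrix B = M * H * Mᴴ has its k-th row and its k-th column identically zero: B k j = 0 and B r k = 0 for all j, r. -/

import Mathlib

open Matrix

theorem row_col_killed {R : Type*} [CommRing R] [StarRing R] {n : Type*}
    [Fintype n] [DecidableEq n] (H : Matrix n n R) (hH : H.IsHermitian)
    (k : n) (α : n → R) (hk : α k = 0)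
    (hrow : ∀ j, H k j = ∑ l, α l * H l j) :
    let M : Matrix n n R := 1 - ∑ l, α l • Matrix.single k l 1
    let B : Matrix n n R := M * H * Mᴴ
    (∀ j, B k j = 0) ∧ (∀ r, B r k = 0) := by
  intro M B
  have hMk : ∀ i, M k i = (if k = i then 1 else 0) - α i := by
    intro i
    simp [M, Matrix.sub_apply, Matrix.one_apply, Matrix.sum_apply,
      Matrix.single, Finset.sum_ite_eq, mul_ite]
  have hMH : ∀ j, (M * H) k j = 0 := by
    intro j
    rw [Matrix.mul_apply]
    have : ∀ i, M k i * H i j = (if k = i then H i j else 0) - α i * H i j := by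
      intro i
      rw [hMk]
      by_cases h : k = i <;> simp [h, sub_mul]
    simp only [this, Finset.sum_sub_distrib, Finset.sum_ite_eq, Finset.mem_univ,
      if_true]
    rw [← hrow j]
    ring
  have hrowB : ∀ j, B k j = 0 := by
    intro j
    show (M * H * Mᴴ) k j = 0
    rw [Matrix.mul_apply]
    simp [hMH]
  refine ⟨hrowB, fun r => ?_⟩
  have hBH : B.IsHermitian := by
    have : Bᴴ = B := by
      show (M * H * Mᴴ)ᴴ = M * H * Mᴴ
      rw [Matrix.conjTranspose_mul, Matrix.conjTranspose_mul,
        Matrix.conjTranspose_conjTranspose, hH.eq, Matrix.mul_assoc]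
    exact this
  have := hBH.apply r k
  rw [← this, hrowB r]
  simp
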